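/- Under the joint law of (X, Y₁, …, Y_K) described in the context, the select-max estimator is optimal for the one-sided error distortion: for every measurable function g : ℝ^K → ℝ with g(Y₁, …, Y_K) ≤ X almost surely (i.e., the one-sided distortion of g is almost surely finite), one has E[X − g(Y₁, …, Y_K)] ≥ E[X − Ŷ]. -/

import Mathlib

/-!
Given `X = x`, the density `y ↦ δe^{−δ(x−y)}` of the channel factors as
`e^{−δ(x−x')} · δe^{−δ(x'−y)}`, and the atom at `0` scales by the same factor. Hence for
`q ≤ x' ≤ x` the law of `(Y₁, …, Y_K)` on the box `{Yᵢ ≤ q}` under `X = x` is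
`e^{−Kδ(x−x')}` times its law under `X = x'`. Suppose `g(Y) ≥ q' > q ≥ max Y` had positive
probability under some `X = x`. If `x < q'` this contradicts `g(Y) ≤ X` directly; otherwise it
has positive probability under `X = x'` for every `x' ∈ (q, q')`, where it forces `g(Y) > X`, and
these `x'` carry positive `Exp(λ)`-mass. So `g(Y) ≤ max Y` almost surely, which gives the
inequality pointwise.
-/

open MeasureTheory

/-- The one-sided exponential distribution `Exp(r)`, with density `r·e^{−r x}` on `x ≥ 0`. -/
noncomputable def expMeasure (r : ℝ) : Measure ℝ :=
  volume.withDensity fun x => if 0 ≤ x then ENNReal.ofReal (r * Real.exp (-r * x)) else 0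

/-- The forward test channel `κ(x)` of the one-sided exponential source: an atom of mass
`e^{−δx}` at `0` plus the density `y ↦ δ·e^{−δ(x−y)}` on the interval `(0, x]`. -/
noncomputable def expChannel (δ : ℝ) (x : ℝ) : Measure ℝ :=
  (ENNReal.ofReal (Real.exp (-δ * x))) • Measure.dirac 0 +
    volume.withDensity
      ((Set.Ioc (0 : ℝ) x).indicator fun y => ENNReal.ofReal (δ * Real.exp (-δ * (x - y))))

/-- The joint law of `(X, Y₁, …, Y_K)`: the composition of `Exp(λ)` (the law of `X`) with the
`K`-fold product kernel `x ↦ κ(x)^{⊗K}`, so that `Y₁, …, Y_K` are conditionally i.i.d. given `X`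
with conditional law `κ(X)`. -/
noncomputable def jointLaw (lam δ : ℝ) (K : ℕ) : Measure (ℝ × (Fin K → ℝ)) :=
  (expMeasure lam).bind fun x =>
    (Measure.pi fun _ : Fin K => expChannel δ x).map fun ys => (x, ys)

open Set
open ProbabilityTheory (Kernel IsFiniteKernel IsMarkovKernel)
open scoped ProbabilityTheory
open scoped ENNReal NNReal

section ExpChannel

variable {δ : ℝ}

lemma expChannel_ae_nonneg (δ x : ℝ) : ∀ᵐ y ∂expChannel δ x, 0 ≤ y := by
  have hdisj : ∀ y ∈ Iio (0 : ℝ), y ∉ Ioc 0 x := fun y hy h => (lt_asymm hy h.1).elim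
  simp only [ae_iff, not_le]
  change expChannel δ x (Iio 0) = 0
  simp [expChannel, withDensity_apply _ measurableSet_Iio,
    setLIntegral_congr_fun measurableSet_Iio fun y hy => indicator_of_notMem (hdisj y hy) _]

lemma integral_expChannel_density {x : ℝ} (hx : 0 ≤ x) :
    ∫ y in Ioc 0 x, δ * Real.exp (-δ * (x - y)) = 1 - Real.exp (-δ * x) := by
  have hderiv : ∀ y ∈ uIcc 0 x,
      HasDerivAt (fun y => Real.exp (-δ * (x - y))) (δ * Real.exp (-δ * (x - y))) y := by
    intro y _
    convert (((hasDerivAt_id' y).const_sub x).const_mul (-δ)).exp using 1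
    ring
  rw [← intervalIntegral.integral_of_le hx, intervalIntegral.integral_eq_sub_of_hasDerivAt hderiv
    ((by fun_prop : Continuous _).intervalIntegrable _ _)]
  simp

lemma isProbabilityMeasure_expChannel (hδ : 0 < δ) {x : ℝ} (hx : 0 ≤ x) :
    IsProbabilityMeasure (expChannel δ x) := by
  constructor
  have hexp : Real.exp (-δ * x) ≤ 1 := Real.exp_le_one_iff.2 (by nlinarith)
  rw [expChannel, Measure.add_apply, withDensity_apply _ MeasurableSet.univ, Measure.restrict_univ,
    lintegral_indicator measurableSet_Ioc, ← ofReal_integral_eq_lintegral_ofReal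
      (Continuous.integrableOn_Ioc (by fun_prop)) (.of_forall fun y => by positivity),
    integral_expChannel_density hx, Measure.smul_apply, measure_univ, smul_eq_mul, mul_one,
    ← ENNReal.ofReal_add (Real.exp_nonneg _) (sub_nonneg.2 hexp), add_sub_cancel,
    ENNReal.ofReal_one]

lemma measurable_expChannel (δ : ℝ) : Measurable (expChannel δ) := by
  let density : ℝ → ℝ → ℝ≥0∞ := fun x => (Ioc 0 x).indicator fun y =>
    ENNReal.ofReal (δ * Real.exp (-δ * (x - y)))
  have hdensity : Measurable (Function.uncurry density) :=
    (by fun_prop : Measurable fun p : ℝ × ℝ =>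
      ENNReal.ofReal (δ * Real.exp (-δ * (p.1 - p.2)))).indicator
        ((measurableSet_lt measurable_const measurable_snd).inter
          (measurableSet_le measurable_snd measurable_fst))
  have hatom : Measurable (Function.uncurry fun (x : ℝ) (_ : ℝ) =>
      ENNReal.ofReal (Real.exp (-δ * x))) := by
    fun_prop
  let κ : Kernel ℝ ℝ := Kernel.withDensity (Kernel.const ℝ (Measure.dirac 0))
      (fun x _ => ENNReal.ofReal (Real.exp (-δ * x))) +
    Kernel.withDensity (Kernel.const ℝ volume) density
  have : expChannel δ = κ := by
    ext1 x
    rw [FunLike.coe_add, Pi.add_apply, Kernel.withDensity_apply _ hatom,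
      Kernel.withDensity_apply _ hdensity, Kernel.const_apply, Kernel.const_apply, withDensity_const]
    rfl
  exact this ▸ κ.measurable

lemma expChannel_restrict_Iic {q x' x : ℝ} (hqx' : q ≤ x') (hx' : x' ≤ x) :
    (expChannel δ x).restrict (Iic q) =
      (Real.exp (-δ * (x - x'))).toNNReal • (expChannel δ x').restrict (Iic q) := by
  classical
  have hsplit : ∀ z,
      Real.exp (-δ * (x - z)) = Real.exp (-δ * (x - x')) * Real.exp (-δ * (x' - z)) := fun z => by
    rw [← Real.exp_add]
    congr 1
    ring
  rw [ENNReal.smul_def, show ((Real.exp (-δ * (x - x'))).toNNReal : ℝ≥0∞) =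
    ENNReal.ofReal (Real.exp (-δ * (x - x'))) from rfl]
  simp only [expChannel, Measure.restrict_add, Measure.restrict_smul,
    restrict_dirac' measurableSet_Iic, restrict_withDensity measurableSet_Iic, smul_add,
    ← withDensity_smul' _ _ ENNReal.ofReal_ne_top]
  congr 1
  · split_ifs
    · have h0 := hsplit 0
      rw [sub_zero, sub_zero] at h0
      rw [smul_smul, ← ENNReal.ofReal_mul (Real.exp_nonneg _), ← h0]
    · simp
  · refine withDensity_congr_ae
      ((ae_restrict_iff' measurableSet_Iic).2 (.of_forall fun y hy => ?_))
    have hyx' : y ≤ x' := (mem_Iic.1 hy).trans hqx'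
    have hmem : y ∈ Ioc 0 x ↔ y ∈ Ioc 0 x' :=
      ⟨fun h => ⟨h.1, hyx'⟩, fun h => ⟨h.1, h.2.trans hx'⟩⟩
    by_cases hy' : y ∈ Ioc 0 x'
    · rw [Pi.smul_apply, indicator_of_mem hy', indicator_of_mem (hmem.2 hy'), smul_eq_mul, hsplit,
        mul_left_comm, ENNReal.ofReal_mul (Real.exp_nonneg _)]
    · simp [indicator_of_notMem hy', indicator_of_notMem (mt hmem.1 hy')]

end ExpChannel

section MeasurePi

variable {ι : Type*} [Fintype ι] {α : ι → Type*} [∀ i, MeasurableSpace (α i)]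

theorem MeasureTheory.Measure.pi_smul (μ : ∀ i, Measure (α i)) [∀ i, SigmaFinite (μ i)]
    (c : ℝ≥0) : Measure.pi (fun i => c • μ i) = c ^ Fintype.card ι • Measure.pi μ := by
  refine Measure.pi_eq fun s hs => ?_
  simp only [Measure.smul_apply, Measure.pi_pi, Finset.prod_mul_distrib, Finset.prod_const,
    Finset.card_univ, ENNReal.smul_def, smul_eq_mul, ENNReal.coe_pow]

theorem Measurable.measure_pi {β : Type*} [MeasurableSpace β] {μ : β → ∀ i, Measure (α i)}
    [∀ b i, IsFiniteMeasure (μ b i)] (hμ : ∀ i, Measurable fun b => μ b i) :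
    Measurable fun b => Measure.pi (μ b) := by
  have hbox : ∀ s : ∀ i, Set (α i), (∀ i, MeasurableSet (s i)) →
      Measurable fun b => Measure.pi (μ b) (univ.pi s) := fun s hs => by
    simp_rw [Measure.pi_pi]
    exact Finset.measurable_prod _ fun i _ => (Measure.measurable_coe (hs i)).comp (hμ i)
  refine .measure_of_isPiSystem generateFrom_pi.symm isPiSystem_pi ?_ ?_
  · rintro _ ⟨s, hs, rfl⟩
    exact hbox s fun i => hs i (mem_univ i)
  · simpa using hbox (fun _ => univ) fun _ => .univ

namespace ProbabilityTheory.Kernel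

variable {β : Type*} [MeasurableSpace β]

noncomputable def pi (κ : ∀ i, Kernel β (α i)) [∀ i, IsFiniteKernel (κ i)] :
    Kernel β (∀ i, α i) where
  toFun b := Measure.pi fun i => κ i b
  measurable' := Measurable.measure_pi fun i => (κ i).measurable

lemma pi_apply (κ : ∀ i, Kernel β (α i)) [∀ i, IsFiniteKernel (κ i)] (b : β) :
    pi κ b = Measure.pi fun i => κ i b := rfl

instance (κ : ∀ i, Kernel β (α i)) [∀ i, IsMarkovKernel (κ i)] : IsMarkovKernel (pi κ) :=
  ⟨fun b => by rw [pi_apply]; infer_instance⟩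

end ProbabilityTheory.Kernel

end MeasurePi

section JointLaw

variable {δ : ℝ}

instance (lam : ℝ) : SFinite (expMeasure lam) := by
  unfold expMeasure; infer_instance

lemma expMeasure_ae_nonneg (lam : ℝ) : ∀ᵐ x ∂expMeasure lam, 0 ≤ x := by
  simp only [ae_iff, not_le]
  change expMeasure lam (Iio 0) = 0
  rw [expMeasure, withDensity_apply _ measurableSet_Iio,
    setLIntegral_congr_fun measurableSet_Iio fun x hx => if_neg (not_le.2 hx), lintegral_zero]

lemma absolutelyContinuous_expMeasure {lam : ℝ} (hlam : 0 < lam) :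
    volume.restrict (Ioi 0) ≪ expMeasure lam := by
  have hpos : ∀ᵐ x ∂volume.restrict (Ioi 0),
      (if 0 ≤ x then ENNReal.ofReal (lam * Real.exp (-lam * x)) else 0) ≠ 0 :=
    (ae_restrict_iff' measurableSet_Ioi).2 (.of_forall fun x hx => by
      simp [le_of_lt (mem_Ioi.1 hx), hlam, Real.exp_pos])
  have hdensity : Measurable fun x : ℝ =>
      if 0 ≤ x then ENNReal.ofReal (lam * Real.exp (-lam * x)) else 0 :=
    Measurable.ite measurableSet_Ici (by fun_prop) measurable_const
  refine (withDensity_absolutelyContinuous' hdensity.aemeasurable hpos).trans ?_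
  rw [← restrict_withDensity measurableSet_Ioi]
  exact Measure.absolutelyContinuous_of_le Measure.restrict_le_self

lemma exists_mem_Ioo_of_ae_expMeasure {lam : ℝ} (hlam : 0 < lam) {P : ℝ → Prop}
    (h : ∀ᵐ x ∂expMeasure lam, P x) {a b : ℝ} (ha : 0 ≤ a) (hab : a < b) :
    ∃ x ∈ Ioo a b, P x := by
  have hP : ∀ᵐ x ∂volume.restrict (Ioo a b), x ∈ Ioo a b ∧ P x :=
    (ae_restrict_mem measurableSet_Ioo).and <| ae_restrict_of_ae_restrict_of_subset
      (fun x hx => ha.trans_lt hx.1) ((absolutelyContinuous_expMeasure hlam).ae_le h)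
  have : (ae (volume.restrict (Ioo a b))).NeBot := ae_neBot.2 (by simp [hab])
  obtain ⟨x, hx, hPx⟩ := hP.exists
  exact ⟨x, hx, hPx⟩

/-- Clamping at `0` makes the channel a Markov kernel and changes nothing `Exp(λ)`-a.e. -/
noncomputable def expChannelKernel (δ : ℝ) : Kernel ℝ ℝ where
  toFun x := expChannel δ (max x 0)
  measurable' := (measurable_expChannel δ).comp (measurable_id.max measurable_const)

instance [Fact (0 < δ)] : IsMarkovKernel (expChannelKernel δ) :=
  ⟨fun x => isProbabilityMeasure_expChannel Fact.out (le_max_right x 0)⟩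

lemma expChannelKernel_apply_of_nonneg {x : ℝ} (hx : 0 ≤ x) :
    expChannelKernel δ x = expChannel δ x := by
  simp [expChannelKernel, max_eq_left hx]

lemma jointLaw_eq_compProd [Fact (0 < δ)] (lam : ℝ) (K : ℕ) :
    jointLaw lam δ K = expMeasure lam ⊗ₘ Kernel.pi fun _ : Fin K => expChannelKernel δ := by
  rw [Measure.compProd_eq_comp_prod]
  refine Measure.bind_congr_right ?_
  filter_upwards [expMeasure_ae_nonneg lam] with x hx
  rw [Kernel.prod_apply, Kernel.id_apply, Measure.dirac_prod, Kernel.pi_apply]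
  simp only [expChannelKernel_apply_of_nonneg hx]

end JointLaw

section SelectMax

variable {δ : ℝ} {ι : Type*} [Fintype ι]

lemma pi_expChannel_eq_of_subset_Iic (hδ : 0 < δ) {q x' x : ℝ} (hqx' : q ≤ x') (hx'0 : 0 ≤ x')
    (hx' : x' ≤ x) {S : Set (ι → ℝ)} (hS : S ⊆ univ.pi fun _ => Iic q) :
    Measure.pi (fun _ : ι => expChannel δ x) S =
      (Real.exp (-δ * (x - x'))).toNNReal ^ Fintype.card ι *
        Measure.pi (fun _ : ι => expChannel δ x') S := by
  have := isProbabilityMeasure_expChannel hδ hx'0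
  have := isProbabilityMeasure_expChannel hδ (hx'0.trans hx')
  have hbox := MeasurableSet.univ_pi fun _ : ι => measurableSet_Iic (a := q)
  rw [← inter_eq_left.2 hS, ← Measure.restrict_apply' hbox, ← Measure.restrict_apply' hbox,
    Measure.restrict_pi_pi, Measure.restrict_pi_pi,
    funext fun _ => expChannel_restrict_Iic hqx' hx', Measure.pi_smul, Measure.smul_apply,
    ENNReal.smul_def, smul_eq_mul, ENNReal.coe_pow]

variable {g : (ι → ℝ) → ℝ}

lemma ae_pi_expChannel_lt_of_forall_le (hδ : 0 < δ)
    (hdense : ∀ a b, 0 ≤ a → a < b →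
      ∃ x' ∈ Ioo a b, ∀ᵐ y ∂Measure.pi fun _ : ι => expChannel δ x', g y ≤ x')
    {x : ℝ} (hx : ∀ᵐ y ∂Measure.pi fun _ : ι => expChannel δ x, g y ≤ x)
    {q q' : ℝ} (hq : 0 ≤ q) (hqq' : q < q') :
    ∀ᵐ y ∂Measure.pi fun _ : ι => expChannel δ x, (∀ i, y i ≤ q) → g y < q' := by
  rcases lt_or_ge x q' with hxq' | hq'x
  · filter_upwards [hx] with y hy _ using hy.trans_lt hxq'
  obtain ⟨x', ⟨hqx', hx'q'⟩, hx'⟩ := hdense q q' hq hqq'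
  rw [ae_iff] at hx' ⊢
  have hsub : {y : ι → ℝ | ¬((∀ i, y i ≤ q) → g y < q')} ⊆ univ.pi fun _ => Iic q := by
    intro y hy i _
    by_contra hyi
    exact hy fun hle => absurd (hle i) hyi
  rw [pi_expChannel_eq_of_subset_Iic hδ hqx'.le (hq.trans hqx'.le) (hx'q'.le.trans hq'x) hsub]
  refine mul_eq_zero_of_right _ (measure_mono_null ?_ hx')
  intro y hy hgx'
  exact hy fun _ => hgx'.trans_lt hx'q'

lemma ae_pi_expChannel_le_iSup [Nonempty ι] (hδ : 0 < δ)
    (hdense : ∀ a b, 0 ≤ a → a < b →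
      ∃ x' ∈ Ioo a b, ∀ᵐ y ∂Measure.pi fun _ : ι => expChannel δ x', g y ≤ x')
    {x : ℝ} (hx0 : 0 ≤ x) (hx : ∀ᵐ y ∂Measure.pi fun _ : ι => expChannel δ x, g y ≤ x) :
    ∀ᵐ y ∂Measure.pi fun _ : ι => expChannel δ x, g y ≤ ⨆ i, y i := by
  have := isProbabilityMeasure_expChannel hδ hx0
  have hnonneg : ∀ᵐ y ∂Measure.pi fun _ : ι => expChannel δ x, ∀ i, 0 ≤ y i :=
    ae_all_iff.2 fun _ => Measure.tendsto_eval_ae_ae.eventually (expChannel_ae_nonneg δ x)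
  have hboxes : ∀ᵐ y ∂Measure.pi fun _ : ι => expChannel δ x,
      ∀ q q' : ℚ, 0 ≤ (q : ℝ) → (q : ℝ) < q' → (∀ i, y i ≤ (q : ℝ)) → g y < q' :=
    ae_all_iff.2 fun q => ae_all_iff.2 fun q' => by
      by_cases hqq' : 0 ≤ (q : ℝ) ∧ (q : ℝ) < q'
      · filter_upwards [ae_pi_expChannel_lt_of_forall_le hδ hdense hx hqq'.1 hqq'.2]
          with y hy _ _ using hy
      · exact .of_forall fun y h0 hlt => absurd ⟨h0, hlt⟩ hqq'
  filter_upwards [hnonneg, hboxes] with y hy0 hy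
  have hbdd : BddAbove (range y) := (finite_range y).bddAbove
  by_contra! hlt
  obtain ⟨q, hq, hqg⟩ := exists_rat_btwn hlt
  obtain ⟨q', hqq', hq'g⟩ := exists_rat_btwn hqg
  have hsup0 : 0 ≤ ⨆ i, y i := (hy0 (Classical.arbitrary ι)).trans (le_ciSup hbdd _)
  exact (hy q q' (hsup0.trans hq.le) hqq' fun i => (le_ciSup hbdd i).trans hq.le).not_ge hq'g.le

end SelectMax

lemma jointLaw_ae_le_iSup {lam δ : ℝ} (hlam : 0 < lam) (hδ : 0 < δ) {K : ℕ} [NeZero K]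
    {g : (Fin K → ℝ) → ℝ} (hg : Measurable g) (hle : ∀ᵐ p ∂jointLaw lam δ K, g p.2 ≤ p.1) :
    ∀ᵐ p ∂jointLaw lam δ K, g p.2 ≤ ⨆ i, p.2 i := by
  have : Fact (0 < δ) := ⟨hδ⟩
  rw [jointLaw_eq_compProd] at hle ⊢
  have hfiber : ∀ᵐ x ∂expMeasure lam,
      0 ≤ x ∧ ∀ᵐ y ∂Measure.pi fun _ : Fin K => expChannel δ x, g y ≤ x := by
    filter_upwards [Measure.ae_ae_of_ae_compProd hle, expMeasure_ae_nonneg lam] with x hx hx0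
    simpa [Kernel.pi_apply, expChannelKernel_apply_of_nonneg hx0, hx0] using hx
  have hdense : ∀ a b, 0 ≤ a → a < b →
      ∃ x' ∈ Ioo a b, ∀ᵐ y ∂Measure.pi fun _ : Fin K => expChannel δ x', g y ≤ x' :=
    fun a b ha hab =>
      (exists_mem_Ioo_of_ae_expMeasure hlam hfiber ha hab).imp fun _ h => ⟨h.1, h.2.2⟩
  have hmeas : MeasurableSet {p : ℝ × (Fin K → ℝ) | g p.2 ≤ ⨆ i, p.2 i} :=
    measurableSet_le (by fun_prop) (Measurable.iSup fun i => by fun_prop)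
  rw [Measure.ae_compProd_iff hmeas]
  filter_upwards [hfiber] with x ⟨hx0, hx⟩
  rw [Kernel.pi_apply]
  simp only [expChannelKernel_apply_of_nonneg hx0]
  exact ae_pi_expChannel_le_iSup hδ hdense hx0 hx

/-- STATEMENT 6: under the joint law of `(X, Y₁, …, Y_K)`, the select-max estimator
`Ŷ = max{Y₁,…,Y_K}` is optimal for the one-sided error distortion: for every measurable
`g : ℝ^K → ℝ` with `g(Y₁, …, Y_K) ≤ X` almost surely (i.e., the one-sided distortion of `g` is
almost surely finite), one has `E[X − g(Y₁, …, Y_K)] ≥ E[X − Ŷ]`. -/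
theorem selectMax_optimal (lam D : ℝ) (hlam : 0 < lam) (hD : 0 < D)
    (hD' : D < 1 / lam) (K : ℕ) (hK : 1 ≤ K)
    (g : (Fin K → ℝ) → ℝ) (hg : Measurable g)
    (hle : ∀ᵐ p ∂(jointLaw lam (1 / D - lam) K), g p.2 ≤ p.1) :
    ∫⁻ p, ENNReal.ofReal (p.1 - ⨆ i, p.2 i) ∂(jointLaw lam (1 / D - lam) K)
      ≤ ∫⁻ p, ENNReal.ofReal (p.1 - g p.2) ∂(jointLaw lam (1 / D - lam) K) := by
  have hδ : 0 < 1 / D - lam := by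
    rw [sub_pos, lt_div_iff₀ hD, mul_comm]
    rwa [lt_div_iff₀ hlam] at hD'
  have : NeZero K := ⟨by omega⟩
  refine lintegral_mono_ae ?_
  filter_upwards [jointLaw_ae_le_iSup hlam hδ hg hle] with p hp
  exact ENNReal.ofReal_le_ofReal (sub_le_sub_left hp _)
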